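/- arXiv:2304.12451 — 6 statements merged into one kernel-verified Lean document; each statement's English description precedes it below -/
import Mathlib

section
/- Let F and B be m×r complex matrices such that rank(B* F) = rank(F) = k, where B* denotes the conjugate transpose of B. Let M be the Moore–Penrose pseudoinverse of B* F, i.e. an r×r complex matrix satisfying the four Penrose equations (B*F) M (B*F) = B*F, M (B*F) M = M, ((B*F) M)* = (B*F) M, and (M (B*F))* = M (B*F). Then Y* := M B* is a generalized inverse of F, i.e. F (M B*) F = F. -/
open Matrix

/-- If `rank (Bᴴ * F) = rank F = k` and `M` is the Moore–Penrose pseudoinverse of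
`Bᴴ * F` (i.e. satisfies the four Penrose equations), then `M * Bᴴ` is a generalized
inverse of `F`. -/
theorem generalized_inverse_of_rank_preserving
    (m r k : ℕ) (F B : Matrix (Fin m) (Fin r) ℂ)
    (M : Matrix (Fin r) (Fin r) ℂ)
    (hrankBF : (Bᴴ * F).rank = k) (hrankF : F.rank = k)
    (hM1 : (Bᴴ * F) * M * (Bᴴ * F) = Bᴴ * F)
    (hM2 : M * (Bᴴ * F) * M = M)
    (hM3 : ((Bᴴ * F) * M)ᴴ = (Bᴴ * F) * M)
    (hM4 : (M * (Bᴴ * F))ᴴ = M * (Bᴴ * F)) :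
    F * (M * Bᴴ) * F = F := by
  -- kernels
  have hle : LinearMap.ker F.mulVecLin ≤ LinearMap.ker (Bᴴ * F).mulVecLin := by
    intro v hv
    simp only [LinearMap.mem_ker, mulVecLin_apply] at hv ⊢
    rw [← mulVec_mulVec, hv, mulVec_zero]
  have hkerdim : Module.finrank ℂ (LinearMap.ker F.mulVecLin)
      = Module.finrank ℂ (LinearMap.ker (Bᴴ * F).mulVecLin) := by
    have h1 := LinearMap.finrank_range_add_finrank_ker F.mulVecLin
    have h2 := LinearMap.finrank_range_add_finrank_ker (Bᴴ * F).mulVecLin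
    have hr1 : Module.finrank ℂ (LinearMap.range F.mulVecLin) = k := hrankF
    have hr2 : Module.finrank ℂ (LinearMap.range (Bᴴ * F).mulVecLin) = k := hrankBF
    simp only [Module.finrank_fin_fun] at h1 h2
    omega
  have hker : LinearMap.ker F.mulVecLin = LinearMap.ker (Bᴴ * F).mulVecLin :=
    Submodule.eq_of_le_of_finrank_le hle (le_of_eq hkerdim.symm)
  -- mulVec equality
  have key : ∀ v : Fin r → ℂ, (F * (M * Bᴴ) * F).mulVec v = F.mulVec v := by
    intro v
    have hmem : (M * (Bᴴ * F)).mulVec v - v ∈ LinearMap.ker (Bᴴ * F).mulVecLin := by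
      simp only [LinearMap.mem_ker, mulVecLin_apply, mulVec_sub, mulVec_mulVec]
      rw [show Bᴴ * F * (M * (Bᴴ * F)) = Bᴴ * F from by rw [← Matrix.mul_assoc, hM1], sub_self]
    rw [← hker, LinearMap.mem_ker, mulVecLin_apply, mulVec_sub, sub_eq_zero] at hmem
    calc (F * (M * Bᴴ) * F).mulVec v = F.mulVec ((M * (Bᴴ * F)).mulVec v) := by
          simp only [← mulVec_mulVec, Matrix.mul_assoc]
      _ = F.mulVec v := by rw [hmem]
  ext i j
  have := congrFun (key (Pi.single j 1)) i
  simpa [mulVec_single] using this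
end

section
/- Let H and D be n×q complex matrices such that rank(H* D) = rank(H) = k, where H* denotes the conjugate transpose of H. Let M be the Moore–Penrose pseudoinverse of H* D, i.e. a q×q complex matrix satisfying the four Penrose equations (H*D) M (H*D) = H*D, M (H*D) M = M, ((H*D) M)* = (H*D) M, and (M (H*D))* = M (H*D). Then X := D M is a generalized inverse of H*, i.e. H* (D M) H* = H*. -/
open Matrix

/-- If `rank (Hᴴ * D) = rank H = k` and `M` is the Moore–Penrose pseudoinverse of
`Hᴴ * D` (i.e. satisfies the four Penrose equations), then `D * M` is a generalized
inverse of `Hᴴ`. -/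
theorem generalized_inverse_of_rank_preserving_row
    (n q k : ℕ) (H D : Matrix (Fin n) (Fin q) ℂ)
    (M : Matrix (Fin q) (Fin q) ℂ)
    (hrankHD : (Hᴴ * D).rank = k) (hrankH : H.rank = k)
    (hM1 : (Hᴴ * D) * M * (Hᴴ * D) = Hᴴ * D)
    (hM2 : M * (Hᴴ * D) * M = M)
    (hM3 : ((Hᴴ * D) * M)ᴴ = (Hᴴ * D) * M)
    (hM4 : (M * (Hᴴ * D))ᴴ = M * (Hᴴ * D)) :
    Hᴴ * (D * M) * Hᴴ = Hᴴ := by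
  have hle : LinearMap.range (Hᴴ * D).mulVecLin ≤ LinearMap.range Hᴴ.mulVecLin := by
    rw [Matrix.mulVecLin_mul]
    exact LinearMap.range_comp_le_range _ _
  have hfin : Module.finrank ℂ (LinearMap.range Hᴴ.mulVecLin)
      ≤ Module.finrank ℂ (LinearMap.range (Hᴴ * D).mulVecLin) := by
    have : Hᴴ.rank = (Hᴴ * D).rank := by
      open ComplexOrder in
      rw [Matrix.rank_conjTranspose, hrankH, hrankHD]
    simpa [Matrix.rank] using this.le
  have heq : LinearMap.range (Hᴴ * D).mulVecLin = LinearMap.range Hᴴ.mulVecLin :=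
    Submodule.eq_of_le_of_finrank_le hle hfin
  have hcol : ∀ j : Fin n, ∃ c : Fin q → ℂ,
      (Hᴴ * D).mulVec c = Hᴴ.mulVec (Pi.single j 1) := by
    intro j
    have : Hᴴ.mulVec (Pi.single j 1) ∈ LinearMap.range (Hᴴ * D).mulVecLin := by
      rw [heq]; exact ⟨Pi.single j 1, rfl⟩
    exact this
  choose c hc using hcol
  set C : Matrix (Fin q) (Fin n) ℂ := Matrix.of fun i j => c j i with hC
  have hHC : Hᴴ * D * C = Hᴴ := by
    ext i j
    have := congrFun (hc j) i
    simp only [Matrix.mulVec, Matrix.mul_apply, dotProduct] at this ⊢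
    simpa [hC, Pi.single_apply, Finset.sum_ite_eq', mul_comm] using this
  nth_rewrite 2 [← hHC]
  rw [show Hᴴ * (D * M) * (Hᴴ * D * C) = Hᴴ * D * M * (Hᴴ * D) * C by
    simp only [Matrix.mul_assoc], hM1, hHC]
end

section
/- Let F and B be m×r complex matrices such that rank(B* F) = rank(F) = k, and let M satisfy the four Penrose equations with respect to B* F (i.e. M is the Moore–Penrose pseudoinverse of B* F). Then the m×m matrix P := F (M B*) is idempotent (P² = P) and has rank k. -/
open Matrix

/-- If `rank (Bᴴ * F) = rank F = k` and `M` is the Moore–Penrose pseudoinverse of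
`Bᴴ * F`, then `P = F * (M * Bᴴ)` is an idempotent matrix of rank `k`. -/
theorem hidden_projector_idempotent_rank
    (m r k : ℕ) (F B : Matrix (Fin m) (Fin r) ℂ)
    (M : Matrix (Fin r) (Fin r) ℂ)
    (hrankBF : (Bᴴ * F).rank = k) (hrankF : F.rank = k)
    (hM1 : (Bᴴ * F) * M * (Bᴴ * F) = Bᴴ * F)
    (hM2 : M * (Bᴴ * F) * M = M)
    (hM3 : ((Bᴴ * F) * M)ᴴ = (Bᴴ * F) * M)
    (hM4 : (M * (Bᴴ * F))ᴴ = M * (Bᴴ * F)) :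
    (F * (M * Bᴴ)) * (F * (M * Bᴴ)) = F * (M * Bᴴ) ∧
      (F * (M * Bᴴ)).rank = k := by
  have hidem : (F * (M * Bᴴ)) * (F * (M * Bᴴ)) = F * (M * Bᴴ) := by
    calc (F * (M * Bᴴ)) * (F * (M * Bᴴ))
        = F * ((M * (Bᴴ * F) * M) * Bᴴ) := by
          simp only [Matrix.mul_assoc]
      _ = F * (M * Bᴴ) := by rw [hM2]
  refine ⟨hidem, le_antisymm ?_ ?_⟩
  · calc (F * (M * Bᴴ)).rank ≤ F.rank := Matrix.rank_mul_le_left _ _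
      _ = k := hrankF
  · have key : Bᴴ * (F * (M * Bᴴ)) * F = Bᴴ * F := by
      have := hM1
      simp only [Matrix.mul_assoc] at this ⊢
      exact this
    calc k = (Bᴴ * F).rank := hrankBF.symm
      _ = (Bᴴ * (F * (M * Bᴴ)) * F).rank := by rw [key]
      _ ≤ (Bᴴ * (F * (M * Bᴴ))).rank := Matrix.rank_mul_le_left _ _
      _ ≤ (F * (M * Bᴴ)).rank := Matrix.rank_mul_le_right _ _
end

section
/- Let A be an m×n complex matrix, F an m×r complex matrix, H an n×q complex matrix, and suppose Y* (an r×m matrix) is a generalized inverse of F (i.e. F Y* F = F) and X (an n×q matrix) is a generalized inverse of H* (i.e. H* X H* = H*). Then there exists an r×q matrix G with F G H* = A if and only if F Y* A X H* = A. -/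
open Matrix

/-- Penrose's solvability criterion: given generalized inverses `Y` of `F` and `X` of
`Hᴴ`, the linear matrix equation `F * G * Hᴴ = A` has a solution `G` if and only if
`F * Y * A * X * Hᴴ = A`. -/
theorem penrose_solvability
    (m n r q : ℕ)
    (A : Matrix (Fin m) (Fin n) ℂ)
    (F : Matrix (Fin m) (Fin r) ℂ)
    (H : Matrix (Fin n) (Fin q) ℂ)
    (Y : Matrix (Fin r) (Fin m) ℂ)
    (X : Matrix (Fin n) (Fin q) ℂ)
    (hY : F * Y * F = F)
    (hX : Hᴴ * X * Hᴴ = Hᴴ) :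
    (∃ G : Matrix (Fin r) (Fin q) ℂ, F * G * Hᴴ = A) ↔
      F * Y * A * X * Hᴴ = A := by
  constructor
  · rintro ⟨G, rfl⟩
    calc F * Y * (F * G * Hᴴ) * X * Hᴴ
        = (F * Y * F) * G * (Hᴴ * X * Hᴴ) := by
          simp only [Matrix.mul_assoc]
      _ = F * G * Hᴴ := by rw [hY, hX]
  · intro h
    exact ⟨Y * A * X, by simpa [Matrix.mul_assoc] using h⟩
end

section
/- Let A be an m×n complex matrix, F an m×r complex matrix, H an n×q complex matrix, Y* an r×m matrix with F Y* F = F, and X an n×q matrix with H* X H* = H*. If F Y* A X H* = A, then for every r×q matrix W, the matrix G := Y* A X + W − Y* F W H* X satisfies F G H* = A. -/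
open Matrix

/-- Sufficiency half of Penrose's theorem: if `F * Y * A * X * Hᴴ = A`, then for every
`W`, the matrix `G = Y * A * X + W - Y * F * W * Hᴴ * X` satisfies `F * G * Hᴴ = A`. -/
theorem penrose_general_solution_sufficient
    (m n r q : ℕ)
    (A : Matrix (Fin m) (Fin n) ℂ)
    (F : Matrix (Fin m) (Fin r) ℂ)
    (H : Matrix (Fin n) (Fin q) ℂ)
    (Y : Matrix (Fin r) (Fin m) ℂ)
    (X : Matrix (Fin n) (Fin q) ℂ)
    (hY : F * Y * F = F)
    (hX : Hᴴ * X * Hᴴ = Hᴴ)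
    (hA : F * Y * A * X * Hᴴ = A) :
    ∀ W : Matrix (Fin r) (Fin q) ℂ,
      F * (Y * A * X + W - Y * F * W * Hᴴ * X) * Hᴴ = A := by
  intro W
  have h1 : F * (Y * A * X) * Hᴴ = A := by
    simp only [← Matrix.mul_assoc]; exact hA
  have h2 : F * (Y * F * W * Hᴴ * X) * Hᴴ = F * W * Hᴴ := by
    calc F * (Y * F * W * Hᴴ * X) * Hᴴ = (F * Y * F) * W * (Hᴴ * X * Hᴴ) := by
          simp only [Matrix.mul_assoc]
    _ = F * W * Hᴴ := by rw [hY, hX]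
  calc F * (Y * A * X + W - Y * F * W * Hᴴ * X) * Hᴴ
      = F * (Y * A * X) * Hᴴ + F * W * Hᴴ - F * (Y * F * W * Hᴴ * X) * Hᴴ := by
        simp only [Matrix.mul_add, Matrix.add_mul, Matrix.mul_sub, Matrix.sub_mul]
    _ = A := by rw [h1, h2]; abel
end

section
/- (Correctness of the two-sided encryption scheme.) Let F be an m×r complex matrix, H an n×q complex matrix, Y₁*, Y₂* r×m matrices with F Y₁* F = F and F Y₂* F = F, and X₁, X₂ n×q matrices with H* X₁ H* = H* and H* X₂ H* = H*. Let M be an m×n complex matrix whose column space is contained in the column space of F (there exists C with M = F C) and whose conjugate-transpose column space is contained in the column space of H (there exists C' with M* = H C'). Then for every r×q matrix W, the ciphertext c := Y₁* M X₁ + W − Y₂* F W H* X₂ decrypts correctly: F c H* = M. -/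
open Matrix

/-- Correctness of the two-sided encryption scheme: with generalized inverses `Y₁, Y₂`
of `F` and `X₁, X₂` of `Hᴴ`, a message matrix `M` with `C(M) ⊆ C(F)` and
`C(Mᴴ) ⊆ C(H)` is correctly decrypted from the ciphertext
`Y₁ * M * X₁ + W - Y₂ * F * W * Hᴴ * X₂`. -/
theorem two_sided_encryption_scheme_correct
    (m n r q : ℕ)
    (F : Matrix (Fin m) (Fin r) ℂ)
    (H : Matrix (Fin n) (Fin q) ℂ)
    (Y₁ Y₂ : Matrix (Fin r) (Fin m) ℂ)
    (X₁ X₂ : Matrix (Fin n) (Fin q) ℂ)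
    (hY₁ : F * Y₁ * F = F) (hY₂ : F * Y₂ * F = F)
    (hX₁ : Hᴴ * X₁ * Hᴴ = Hᴴ) (hX₂ : Hᴴ * X₂ * Hᴴ = Hᴴ)
    (M : Matrix (Fin m) (Fin n) ℂ)
    (hColM : ∃ C : Matrix (Fin r) (Fin n) ℂ, M = F * C)
    (hColM' : ∃ C' : Matrix (Fin q) (Fin m) ℂ, Mᴴ = H * C') :
    ∀ W : Matrix (Fin r) (Fin q) ℂ,
      F * (Y₁ * M * X₁ + W - Y₂ * F * W * Hᴴ * X₂) * Hᴴ = M := by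
  intro W
  obtain ⟨C, hC⟩ := hColM
  obtain ⟨C', hC'⟩ := hColM'
  have hM2 : M = C'ᴴ * Hᴴ := by
    have := congrArg conjTranspose hC'
    simpa [conjTranspose_mul] using this
  have h1 : F * Y₁ * M = M := by
    rw [hC, ← Matrix.mul_assoc, hY₁]
  have h2 : M * X₁ * Hᴴ = M := by
    rw [hM2, Matrix.mul_assoc, Matrix.mul_assoc, ← Matrix.mul_assoc Hᴴ X₁ Hᴴ, hX₁]
  have key : F * (Y₁ * M * X₁ + W - Y₂ * F * W * Hᴴ * X₂) * Hᴴ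
      = F * Y₁ * M * X₁ * Hᴴ + F * W * Hᴴ - F * Y₂ * F * W * (Hᴴ * X₂ * Hᴴ) := by
    simp only [Matrix.mul_add, Matrix.add_mul, Matrix.mul_sub, Matrix.sub_mul,
      Matrix.mul_assoc]
  rw [key, hX₂, hY₂, h1, h2]
  abel
end
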